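/- Let ψ, φ be of class P, let p : ℝ≥0 → ℝ≥0 be locally integrable, and let θ > 0 be such that M := sup_{a>0} ∫_a^{ψ(a)} ds/φ(s) < inf_{t≥0} ∫_t^{t+θ} p(s) ds =: N. If M < 0 < N, then the comparison system is strongly GUAS uniformly over S = Γ. -/

import Mathlib

open Set Filter MeasureTheory

noncomputable section

/-- An impulse-time sequence, modeled as a subset of `(0,∞)` whose intersection with any
half-line `(-∞, t]` is finite (equivalently: a strictly increasing, finite or infinite,
sequence of positive reals with no finite limit point). -/
def IsImpulseSeq (γ : Set ℝ) : Prop :=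
  γ ⊆ Set.Ioi (0 : ℝ) ∧ ∀ t : ℝ, (γ ∩ Set.Iic t).Finite

/-- `impCnt γ s t` is the number `n^γ_{(s,t]}` of impulse times in the interval `(s, t]`. -/
def impCnt (γ : Set ℝ) (s t : ℝ) : ℕ := (γ ∩ Set.Ioc s t).ncard

/-- The class `Sup(ρ)` of impulse-time sequences whose impulse frequency is eventually
uniformly upper bounded by `ρ`. -/
def MemSup (ρ : ℝ) (γ : Set ℝ) : Prop :=
  IsImpulseSeq γ ∧ ∀ ε : ℝ, 0 < ε → ∃ T : ℝ, 0 < T ∧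
    ∀ t : ℝ, T ≤ t → ∀ s : ℝ, 0 ≤ s → (impCnt γ s (s + t) : ℝ) / t ≤ ρ + ε

/-- The class `Sdn(ρ)` of impulse-time sequences whose impulse frequency is eventually
uniformly lower bounded by `ρ`. -/
def MemSdn (ρ : ℝ) (γ : Set ℝ) : Prop :=
  IsImpulseSeq γ ∧ ∀ ε : ℝ, 0 < ε → ∃ T : ℝ, 0 < T ∧
    ∀ t : ℝ, T ≤ t → ∀ s : ℝ, 0 ≤ s → ρ - ε ≤ (impCnt γ s (s + t) : ℝ) / t

/-- `S` is a uniform subset of `Sup(ρ)`: the time `T` can be chosen independently of `γ ∈ S`. -/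
def USubSup (ρ : ℝ) (S : Set (Set ℝ)) : Prop :=
  (∀ γ ∈ S, IsImpulseSeq γ) ∧ ∀ ε : ℝ, 0 < ε → ∃ T : ℝ, 0 < T ∧
    ∀ γ ∈ S, ∀ t : ℝ, T ≤ t → ∀ s : ℝ, 0 ≤ s → (impCnt γ s (s + t) : ℝ) / t ≤ ρ + ε

/-- `S` is a uniform subset of `Sdn(ρ)`: the time `T` can be chosen independently of `γ ∈ S`. -/
def USubSdn (ρ : ℝ) (S : Set (Set ℝ)) : Prop :=
  (∀ γ ∈ S, IsImpulseSeq γ) ∧ ∀ ε : ℝ, 0 < ε → ∃ T : ℝ, 0 < T ∧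
    ∀ γ ∈ S, ∀ t : ℝ, T ≤ t → ∀ s : ℝ, 0 ≤ s → ρ - ε ≤ (impCnt γ s (s + t) : ℝ) / t

/-- The average dwell-time class `Sad(n, τ)`. -/
def MemSad (n : ℕ) (τ : ℝ) (γ : Set ℝ) : Prop :=
  IsImpulseSeq γ ∧ ∀ s t : ℝ, 0 ≤ s → s ≤ t → (impCnt γ s t : ℝ) ≤ (n : ℝ) + (t - s) / τ

/-- The reverse average dwell-time class `Srad(n, τ)`. -/
def MemSrad (n : ℕ) (τ : ℝ) (γ : Set ℝ) : Prop :=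
  IsImpulseSeq γ ∧ ∀ s t : ℝ, 0 ≤ s → s ≤ t → -(n : ℝ) + (t - s) / τ ≤ (impCnt γ s t : ℝ)

/-- A function of class `P`: continuous on `[0,∞)`, zero at zero, and positive on `(0,∞)`. -/
def ClassP (α : ℝ → ℝ) : Prop :=
  ContinuousOn α (Set.Ici 0) ∧ α 0 = 0 ∧ ∀ s : ℝ, 0 < s → 0 < α s

/-- `p : [0,∞) → [0,∞)` is nonnegative and locally (Lebesgue) integrable. -/
def LocIntNN (p : ℝ → ℝ) : Prop :=
  (∀ s : ℝ, 0 ≤ p s) ∧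
    ∀ a b : ℝ, 0 ≤ a → a ≤ b → IntervalIntegrable p MeasureTheory.volume a b

/-- A function of class `KL`: continuous on `[0,∞)×[0,∞)`, nonnegative there, for each fixed
`t ≥ 0` strictly increasing in the first argument with value `0` at `0`, for each fixed
`r ≥ 0` strictly decreasing in the second argument whenever positive, and tending to `0` as
the second argument tends to `∞`. -/
def ClassKL (β : ℝ → ℝ → ℝ) : Prop :=
  ContinuousOn (fun q : ℝ × ℝ => β q.1 q.2) (Set.Ici 0 ×ˢ Set.Ici 0) ∧
  (∀ r t : ℝ, 0 ≤ r → 0 ≤ t → 0 ≤ β r t) ∧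
  (∀ t : ℝ, 0 ≤ t → StrictMonoOn (fun r => β r t) (Set.Ici 0) ∧ β 0 t = 0) ∧
  (∀ r : ℝ, 0 ≤ r → ∀ t1 t2 : ℝ, 0 ≤ t1 → t1 < t2 → 0 < β r t1 → β r t2 < β r t1) ∧
  (∀ r : ℝ, 0 ≤ r → Filter.Tendsto (fun t => β r t) Filter.atTop (nhds 0))

/-- `z : [t0, T) → [0,∞)` is a solution of the comparison system
`ż(t) ∈ (−∞, −p(t)φ(z(t))]` for `t ∉ γ`, `z(t) ∈ [0, ψ(z(t⁻))]` for `t ∈ γ`,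
with `z(t0) = z0` (the right endpoint `T` is an extended real, `T = ⊤` meaning a
solution defined on all of `[t0,∞)`).  Between impulse times `z` is continuous, and its
local absolute continuity together with `z' ≤ −p·φ∘z` a.e. is encoded by the integral
inequality `z(b) − z(a) ≤ −∫_a^b p(s)φ(z(s)) ds` on impulse-free subintervals;
at each impulse time in `(t0, T)` the left limit exists and the jump condition holds. -/
structure IsCompSol (p φ ψ : ℝ → ℝ) (γ : Set ℝ) (t0 : ℝ) (T : EReal) (z0 : ℝ)
    (z : ℝ → ℝ) : Prop where
  dom : (t0 : EReal) < T
  init : z t0 = z0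
  nonneg : ∀ t : ℝ, t0 ≤ t → (t : EReal) < T → 0 ≤ z t
  flow_cont : ∀ a b : ℝ, t0 ≤ a → a ≤ b → (b : EReal) < T → γ ∩ Set.Ioc a b = ∅ →
    ContinuousOn z (Set.Icc a b)
  flow_int : ∀ a b : ℝ, t0 ≤ a → a ≤ b → (b : EReal) < T → γ ∩ Set.Ioc a b = ∅ →
    IntervalIntegrable (fun s => p s * φ (z s)) MeasureTheory.volume a b ∧
      z b - z a ≤ - ∫ s in a..b, p s * φ (z s)
  jump : ∀ τ ∈ γ, t0 < τ → (τ : EReal) < T →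
    ∃ L : ℝ, Filter.Tendsto z (nhdsWithin τ (Set.Iio τ)) (nhds L) ∧ z τ ≤ ψ L

/-- The comparison system is weakly GUAS uniformly over the family `S` of impulse-time
sequences. -/
def WeakGUAS (p φ ψ : ℝ → ℝ) (S : Set (Set ℝ)) : Prop :=
  ∃ β : ℝ → ℝ → ℝ, ClassKL β ∧
    ∀ γ ∈ S, ∀ t0 : ℝ, 0 ≤ t0 → ∀ z0 : ℝ, 0 ≤ z0 → ∀ (T : EReal) (z : ℝ → ℝ),
      IsCompSol p φ ψ γ t0 T z0 z →
        ∀ t : ℝ, t0 ≤ t → (t : EReal) < T → z t ≤ β z0 (t - t0)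

/-- The comparison system is strongly GUAS uniformly over the family `S` of impulse-time
sequences (the decay also counts the number of impulses). -/
def StrongGUAS (p φ ψ : ℝ → ℝ) (S : Set (Set ℝ)) : Prop :=
  ∃ β : ℝ → ℝ → ℝ, ClassKL β ∧
    ∀ γ ∈ S, ∀ t0 : ℝ, 0 ≤ t0 → ∀ z0 : ℝ, 0 ≤ z0 → ∀ (T : EReal) (z : ℝ → ℝ),
      IsCompSol p φ ψ γ t0 T z0 z →
        ∀ t : ℝ, t0 ≤ t → (t : EReal) < T →
          z t ≤ β z0 (t - t0 + (impCnt γ t0 t : ℝ))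

/-- `S` is uniformly incrementally bounded (UIB). -/
def UIB (S : Set (Set ℝ)) : Prop :=
  ∃ φ₀ : ℝ → ℝ, ContinuousOn φ₀ (Set.Ioi 0) ∧ MonotoneOn φ₀ (Set.Ioi 0) ∧
    ∀ γ ∈ S, ∀ s t : ℝ, 0 ≤ s → s < t → (impCnt γ s t : ℝ) ≤ φ₀ (t - s)

/-- `M = sup_{a > 0} ∫_a^{ψ(a)} ds/φ(s)`. -/
def Mval (φ ψ : ℝ → ℝ) : ℝ :=
  sSup {y : ℝ | ∃ a : ℝ, 0 < a ∧ y = ∫ s in a..(ψ a), 1 / φ s}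

/-- `N = inf_{t ≥ 0} ∫_t^{t+θ} p(s) ds`. -/
def Nval (p : ℝ → ℝ) (θ : ℝ) : ℝ :=
  sInf {y : ℝ | ∃ t : ℝ, 0 ≤ t ∧ y = ∫ s in t..(t + θ), p s}

/-!
Because `M < 0`, every impulse maps a positive state strictly below itself (`ψ a < a`), and
because `N > 0`, while `z` stays in a band `[ε, r]` the flow lowers it by at least `m · N` per
window of length `θ` and every impulse lowers it by at least `δ`, where `m > 0` and `δ > 0` are
the minima of `φ` and of `x - ψ x` on the band. So solutions are nonincreasing, and a solution
starting below `r` is below `ε` as soon as elapsed time plus number of impulses exceeds a bound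
depending only on `ε` and `r`. These uniform attraction times for the levels
`(r, ε) = (2ⁿ, 2⁻ⁿ)`, together with `z t ≤ z t0`, are majorised by an explicit function of
class KL.
-/

open Topology

section Parameters

variable {φ ψ p : ℝ → ℝ} {θ : ℝ}

lemma ClassP.nonneg (hφ : ClassP φ) {x : ℝ} (hx : 0 ≤ x) : 0 ≤ φ x := by
  obtain rfl | hx := hx.eq_or_lt
  · exact hφ.2.1.ge
  · exact (hφ.2.2 x hx).le

lemma apply_lt_self_of_Mval_neg (hφ : ClassP φ) (hM : Mval φ ψ < 0) {a : ℝ} (ha : 0 < a) :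
    ψ a < a := by
  by_contra! h
  have hbdd : BddAbove {y : ℝ | ∃ a : ℝ, 0 < a ∧ y = ∫ s in a..(ψ a), 1 / φ s} := by
    by_contra hb
    rw [Mval, Real.sSup_of_not_bddAbove hb] at hM
    exact lt_irrefl 0 hM
  have hint : 0 ≤ ∫ s in a..(ψ a), 1 / φ s :=
    intervalIntegral.integral_nonneg h fun u hu => (one_div_pos.2 (hφ.2.2 u (ha.trans_le hu.1))).le
  exact hM.not_ge (hint.trans (le_csSup hbdd ⟨a, ha, rfl⟩))

lemma apply_le_self_of_Mval_neg (hφ : ClassP φ) (hψ : ClassP ψ) (hM : Mval φ ψ < 0) {x : ℝ}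
    (hx : 0 ≤ x) : ψ x ≤ x := by
  obtain rfl | hx := hx.eq_or_lt
  · exact hψ.2.1.le
  · exact (apply_lt_self_of_Mval_neg hφ hM hx).le

lemma LocIntNN.integral_nonneg (hp : LocIntNN p) {a b : ℝ} (hab : a ≤ b) :
    0 ≤ ∫ s in a..b, p s :=
  intervalIntegral.integral_nonneg hab fun s _ => hp.1 s

lemma Nval_le_integral (hp : LocIntNN p) (hθ : 0 ≤ θ) {t : ℝ} (ht : 0 ≤ t) :
    Nval p θ ≤ ∫ s in t..(t + θ), p s :=
  csInf_le ⟨0, by rintro _ ⟨u, -, rfl⟩; exact hp.integral_nonneg (by linarith)⟩ ⟨t, ht, rfl⟩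

lemma nat_mul_Nval_le_integral (hp : LocIntNN p) (hθ : 0 ≤ θ) (n : ℕ) {a b : ℝ} (ha : 0 ≤ a)
    (hab : a + n * θ ≤ b) : n * Nval p θ ≤ ∫ s in a..b, p s := by
  induction n generalizing a with
  | zero => simpa using hp.integral_nonneg (by simpa using hab)
  | succ n ih =>
    push_cast at hab
    rw [← intervalIntegral.integral_add_adjacent_intervals (hp.2 a (a + θ) ha (by linarith))
      (hp.2 (a + θ) b (by linarith) (by nlinarith [(Nat.cast_nonneg n : (0 : ℝ) ≤ n)]))]
    have := ih (a := a + θ) (by linarith) (by linarith)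
    have := Nval_le_integral hp hθ ha
    push_cast
    linarith

end Parameters

lemma IntervalIntegrable.tendsto_integral_nhdsLT {f : ℝ → ℝ} {a b : ℝ}
    (hf : IntervalIntegrable f volume a b) (hab : a < b) :
    Tendsto (fun v => ∫ x in a..v, f x) (𝓝[<] b) (𝓝 (∫ x in a..b, f x)) := by
  have hcont := intervalIntegral.continuousOn_primitive_interval' hf left_mem_uIcc
  rw [uIcc_of_le hab.le] at hcont
  rw [← nhdsWithin_Ioo_eq_nhdsLT hab]
  exact (hcont b (right_mem_Icc.2 hab.le)).mono Ioo_subset_Icc_self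

namespace IsImpulseSeq

variable {γ : Set ℝ}

lemma finite_inter_Ioc (hγ : IsImpulseSeq γ) (s t : ℝ) : (γ ∩ Ioc s t).Finite :=
  (hγ.2 t).subset fun _ hx => ⟨hx.1, hx.2.2⟩

lemma impCnt_add (hγ : IsImpulseSeq γ) {s u t : ℝ} (hsu : s ≤ u) (hut : u ≤ t) :
    impCnt γ s u + impCnt γ u t = impCnt γ s t := by
  unfold impCnt
  rw [← Ioc_union_Ioc_eq_Ioc hsu hut, inter_union_distrib_left,
    ncard_union_eq _ (hγ.finite_inter_Ioc s u) (hγ.finite_inter_Ioc u t)]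
  exact (Ioc_disjoint_Ioc_of_le le_rfl).mono inter_subset_right inter_subset_right

lemma impCnt_eq_of_inter_Ioc_eq_empty (hγ : IsImpulseSeq γ) {s a b : ℝ} (hsa : s ≤ a) (hab : a ≤ b)
    (hfree : γ ∩ Ioc a b = ∅) : impCnt γ s b = impCnt γ s a := by
  rw [← hγ.impCnt_add hsa hab, show impCnt γ a b = 0 by rw [impCnt, hfree, ncard_empty],
    add_zero]

lemma eventually_impCnt_add_one (hγ : IsImpulseSeq γ) {s τ : ℝ} (hτ : τ ∈ γ) (hsτ : s < τ) :
    ∀ᶠ v in 𝓝[<] τ, impCnt γ s v + 1 = impCnt γ s τ := by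
  have hfin : (γ ∩ Iio τ).Finite := (hγ.2 τ).subset (inter_subset_inter_right _ Iio_subset_Iic_self)
  filter_upwards [Ioo_mem_nhdsLT hsτ,
    hfin.eventually_all.2 fun x hx => Ioo_mem_nhdsLT hx.2] with v hv hlt
  have hsingle : γ ∩ Ioc v τ = {τ} := by
    refine Subset.antisymm (fun x hx => ?_) (singleton_subset_iff.2 ⟨hτ, hv.2, le_rfl⟩)
    by_contra hxτ
    exact lt_asymm hx.2.1 (hlt x ⟨hx.1, lt_of_le_of_ne hx.2.2 hxτ⟩).1
  rw [← hγ.impCnt_add hv.1.le hv.2.le, impCnt, impCnt, hsingle, ncard_singleton]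

theorem induction_on (hγ : IsImpulseSeq γ) {t0 : ℝ} {P : ℝ → Prop} (h0 : P t0)
    (flow : ∀ a b, t0 ≤ a → a ≤ b → γ ∩ Ioc a b = ∅ → P a → P b)
    (jump : ∀ τ ∈ γ, t0 < τ → (∀ v ∈ Ico t0 τ, P v) → P τ) {t : ℝ} (ht : t0 ≤ t) : P t := by
  suffices ∀ n : ℕ, ∀ t, t0 ≤ t → impCnt γ t0 t ≤ n → P t from this _ t ht le_rfl
  intro n
  induction n with
  | zero =>
    intro t ht hn
    refine flow t0 t le_rfl ht ?_ h0
    exact (ncard_eq_zero (hγ.finite_inter_Ioc t0 t)).1 (Nat.le_zero.1 hn)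
  | succ n ih =>
    intro t ht hn
    obtain hemp | hne := (γ ∩ Ioc t0 t).eq_empty_or_nonempty
    · exact flow t0 t le_rfl ht hemp h0
    obtain ⟨τ, hτ, hmax⟩ := exists_max_image _ id (hγ.finite_inter_Ioc t0 t) hne
    have hfree : γ ∩ Ioc τ t = ∅ := eq_empty_of_forall_notMem fun x hx =>
      (hmax x ⟨hx.1, hτ.2.1.trans hx.2.1, hx.2.2⟩).not_gt hx.2.1
    refine flow τ t hτ.2.1.le hτ.2.2 hfree (jump τ hτ.1 hτ.2.1 fun v hv => ih v hv.1 ?_)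
    have hpos : 0 < impCnt γ v t :=
      (ncard_pos (hγ.finite_inter_Ioc v t)).2 ⟨τ, hτ.1, hv.2, hτ.2.2⟩
    have := hγ.impCnt_add hv.1 (hv.2.le.trans hτ.2.2)
    omega

end IsImpulseSeq

namespace IsCompSol

variable {p φ ψ : ℝ → ℝ} {γ : Set ℝ} {t0 : ℝ} {T : EReal} {z0 : ℝ} {z : ℝ → ℝ}

lemma restart (sol : IsCompSol p φ ψ γ t0 T z0 z) {s : ℝ} (hs : t0 ≤ s) (hsT : (s : EReal) < T) :
    IsCompSol p φ ψ γ s T (z s) z where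
  dom := hsT
  init := rfl
  nonneg t ht := sol.nonneg t (hs.trans ht)
  flow_cont a b ha := sol.flow_cont a b (hs.trans ha)
  flow_int a b ha := sol.flow_int a b (hs.trans ha)
  jump τ hτ hsτ := sol.jump τ hτ (hs.trans_lt hsτ)

lemma le_sub_mul_integral (sol : IsCompSol p φ ψ γ t0 T z0 z) (hp : LocIntNN p) (ht0 : 0 ≤ t0)
    {a b m : ℝ} (ha : t0 ≤ a) (hab : a ≤ b) (hbT : (b : EReal) < T) (hfree : γ ∩ Ioc a b = ∅)
    (hm : ∀ x ∈ Icc a b, m ≤ φ (z x)) : z b ≤ z a - m * ∫ s in a..b, p s := by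
  obtain ⟨hint, hdecr⟩ := sol.flow_int a b ha hab hbT hfree
  have : ∫ s in a..b, m * p s ≤ ∫ s in a..b, p s * φ (z s) :=
    intervalIntegral.integral_mono_on hab ((hp.2 a b (ht0.trans ha) hab).const_mul m) hint
      fun x hx => by nlinarith [hm x hx, hp.1 x]
  rw [intervalIntegral.integral_const_mul] at this
  linarith

lemma le_of_inter_Ioc_eq_empty (sol : IsCompSol p φ ψ γ t0 T z0 z) (hφ : ClassP φ)
    (hp : LocIntNN p) (ht0 : 0 ≤ t0) {a b : ℝ} (ha : t0 ≤ a) (hab : a ≤ b)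
    (hbT : (b : EReal) < T) (hfree : γ ∩ Ioc a b = ∅) : z b ≤ z a := by
  simpa using sol.le_sub_mul_integral hp ht0 ha hab hbT hfree (m := 0) fun x hx =>
    hφ.nonneg (sol.nonneg x (ha.trans hx.1) ((EReal.coe_le_coe_iff.2 hx.2).trans_lt hbT))

lemma le_sub_of_tendsto_of_mem (sol : IsCompSol p φ ψ γ t0 T z0 z) {τ : ℝ} (hτ : τ ∈ γ)
    (ht0τ : t0 < τ) (hτT : (τ : EReal) < T) {a b δ G : ℝ} {g : ℝ → ℝ}
    (hψδ : ∀ x ∈ Icc a b, ψ x ≤ x - δ) (hg : Tendsto g (𝓝[<] τ) (𝓝 G))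
    (hnear : ∀ᶠ v in 𝓝[<] τ, z v ∈ Icc a b ∧ z v ≤ g v) : z τ ≤ G - δ := by
  obtain ⟨L, hL, hjump⟩ := sol.jump τ hτ ht0τ hτT
  have hLab : L ∈ Icc a b := isClosed_Icc.mem_of_tendsto hL (hnear.mono fun _ hv => hv.1)
  have hLG : L ≤ G := le_of_tendsto_of_tendsto hL hg (hnear.mono fun _ hv => hv.2)
  linarith [hψδ L hLab]

theorem le_sub_integral_sub_impCnt (sol : IsCompSol p φ ψ γ t0 T z0 z) (hφ : ClassP φ)
    (hp : LocIntNN p) (hγ : IsImpulseSeq γ) (ht0 : 0 ≤ t0) {ε m δ : ℝ} (hm : 0 ≤ m)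
    (hδ : 0 ≤ δ) (hφm : ∀ x ∈ Icc ε z0, m ≤ φ x) (hψδ : ∀ x ∈ Icc ε z0, ψ x ≤ x - δ)
    {t : ℝ} (ht : t0 ≤ t) (htT : (t : EReal) < T) (hεz : ∀ x ∈ Icc t0 t, ε ≤ z x) :
    z t ≤ z0 - m * (∫ s in t0..t, p s) - δ * impCnt γ t0 t := by
  set B : ℝ → ℝ := fun v => z0 - m * (∫ s in t0..v, p s) - δ * impCnt γ t0 v
  have hB : ∀ v, t0 ≤ v → B v ≤ z0 := fun v hv => by
    have := mul_nonneg hm (hp.integral_nonneg hv)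
    have : 0 ≤ δ * impCnt γ t0 v := by positivity
    simp only [B]
    linarith
  have hlt : ∀ {a b : ℝ}, a ≤ b → (b : EReal) < T → (a : EReal) < T :=
    fun h hb => (EReal.coe_le_coe_iff.2 h).trans_lt hb
  refine hγ.induction_on (P := fun v => (v : EReal) < T → (∀ x ∈ Icc t0 v, ε ≤ z x) → z v ≤ B v)
    ?_ ?_ ?_ ht htT hεz
  · intro _ _
    simp [B, sol.init, impCnt]
  · intro a b ha hab hfree ih hbT hεb
    have hza := ih (hlt hab hbT) fun x hx => hεb x ⟨hx.1, hx.2.trans hab⟩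
    have hflow := sol.le_sub_mul_integral hp ht0 ha hab hbT hfree (m := m) fun x hx =>
      hφm _ ⟨hεb x ⟨ha.trans hx.1, hx.2⟩,
        ((sol.le_of_inter_Ioc_eq_empty hφ hp ht0 ha hx.1 (hlt hx.2 hbT)
          (subset_eq_empty (inter_subset_inter_right _ (Ioc_subset_Ioc_right hx.2)) hfree)).trans
          (hza.trans (hB a ha)))⟩
    have hsplit := intervalIntegral.integral_add_adjacent_intervals (hp.2 t0 a ht0 ha)
      (hp.2 a b (ht0.trans ha) hab)
    simp only [B, hγ.impCnt_eq_of_inter_Ioc_eq_empty ha hab hfree, ← hsplit, mul_add] at hza ⊢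
    linarith
  · intro τ hτ ht0τ ih hτT hετ
    set c : ℝ := δ * (impCnt γ t0 τ - 1 : ℝ)
    have hnear : ∀ᶠ v in 𝓝[<] τ, z v ∈ Icc ε z0 ∧ z v ≤ z0 - m * (∫ s in t0..v, p s) - c := by
      filter_upwards [Ioo_mem_nhdsLT ht0τ, hγ.eventually_impCnt_add_one hτ ht0τ] with v hv hcnt
      have hzv := ih v ⟨hv.1.le, hv.2⟩ (hlt hv.2.le hτT) fun x hx =>
        hετ x ⟨hx.1, hx.2.trans hv.2.le⟩
      refine ⟨⟨hετ v ⟨hv.1.le, hv.2.le⟩, hzv.trans (hB v hv.1.le)⟩, ?_⟩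
      simpa [B, c, ← hcnt] using hzv
    have hlim := (tendsto_const_nhds (x := z0)).sub
      (((hp.2 t0 τ ht0 ht0τ.le).tendsto_integral_nhdsLT ht0τ).const_mul m) |>.sub
      (tendsto_const_nhds (x := c))
    have := sol.le_sub_of_tendsto_of_mem hτ ht0τ hτT hψδ hlim hnear
    simp only [B, c] at this ⊢
    linarith

theorem apply_le_of_le (sol : IsCompSol p φ ψ γ t0 T z0 z) (hφ : ClassP φ)
    (hψ : ∀ x, 0 ≤ x → ψ x ≤ x) (hp : LocIntNN p) (hγ : IsImpulseSeq γ) (ht0 : 0 ≤ t0)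
    {s t : ℝ} (hs : t0 ≤ s) (hst : s ≤ t) (htT : (t : EReal) < T) : z t ≤ z s := by
  have hsT : (s : EReal) < T := (EReal.coe_le_coe_iff.2 hst).trans_lt htT
  simpa using (sol.restart hs hsT).le_sub_integral_sub_impCnt hφ hp hγ (ht0.trans hs)
    le_rfl le_rfl (fun x hx => hφ.nonneg hx.1) (fun x hx => by simpa using hψ x hx.1) hst htT
    fun x hx => sol.nonneg x (hs.trans hx.1) ((EReal.coe_le_coe_iff.2 hx.2).trans_lt htT)

end IsCompSol

theorem exists_uniform_attraction_time {φ ψ p : ℝ → ℝ} {θ : ℝ} (hφ : ClassP φ) (hψ : ClassP ψ)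
    (hp : LocIntNN p) (hθ : 0 < θ) (hM : Mval φ ψ < 0) (hN : 0 < Nval p θ) {ε : ℝ}
    (hε : 0 < ε) (r : ℝ) :
    ∃ D : ℝ, ∀ γ, IsImpulseSeq γ → ∀ t0, 0 ≤ t0 → ∀ z0 ≤ r, ∀ (T : EReal) (z : ℝ → ℝ),
      IsCompSol p φ ψ γ t0 T z0 z → ∀ t, t0 ≤ t → (t : EReal) < T →
        D ≤ t - t0 + impCnt γ t0 t → z t ≤ ε := by
  have hpos : Icc ε r ⊆ Ioi 0 := fun x hx => hε.trans_le hx.1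
  obtain ⟨m, hm, hφm⟩ :=
    isCompact_Icc.exists_forall_le' (hφ.1.mono (hpos.trans Ioi_subset_Ici_self))
    fun x hx => hφ.2.2 x (hpos hx)
  obtain ⟨δ, hδ, hψδ⟩ := isCompact_Icc.exists_forall_le' (f := fun x => x - ψ x)
    (continuousOn_id.sub (hψ.1.mono (hpos.trans Ioi_subset_Ici_self)))
    fun x hx => sub_pos.2 (apply_lt_self_of_Mval_neg hφ hM (hpos hx))
  -- While `z > ε`, `m ∫ p + δ · #impulses < r`: fewer than `n` windows of length `θ`
  -- and fewer than `r / δ` impulses fit.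
  set n : ℕ := ⌈r / (m * Nval p θ)⌉₊ + 1
  refine ⟨n * θ + r / δ, fun γ hγ t0 ht0 z0 hz0 T z sol t ht htT hD => ?_⟩
  by_contra! hzt
  have hdec := sol.le_sub_integral_sub_impCnt hφ hp hγ ht0 hm.le hδ.le
    (fun x hx => hφm x ⟨hx.1, hx.2.trans hz0⟩)
    (fun x hx => by linarith [hψδ x ⟨hx.1, hx.2.trans hz0⟩]) ht htT fun x hx =>
      hzt.le.trans (sol.apply_le_of_le hφ (fun _ => apply_le_self_of_Mval_neg hφ hψ hM) hp hγ
        ht0 hx.1 hx.2 htT)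
  have hint := mul_nonneg hm.le (hp.integral_nonneg ht)
  have hcnt : (impCnt γ t0 t : ℝ) < r / δ := by
    rw [lt_div_iff₀ hδ]
    nlinarith
  have htime : t - t0 < n * θ := by
    by_contra! h
    have hlow := nat_mul_Nval_le_integral hp hθ.le n ht0 (b := t) (by linarith)
    have hn : r / (m * Nval p θ) < n := (Nat.le_ceil _).trans_lt (by simp [n])
    rw [div_lt_iff₀ (by positivity)] at hn
    nlinarith
  linarith

/-- A continuous antitone majorant, vanishing at infinity, of the step function equal to
`2⁻⁽ᵏ⁺¹⁾` up to time `D k`. -/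
def decayProfile (D : ℕ → ℝ) (s : ℝ) : ℝ :=
  ∑' k : ℕ, (1 / 2) ^ k / (1 + Real.exp (s - D k))

namespace decayProfile

variable {D : ℕ → ℝ}

lemma term_nonneg (s : ℝ) (k : ℕ) : 0 ≤ (1 / 2 : ℝ) ^ k / (1 + Real.exp (s - D k)) := by
  positivity

lemma term_le (s : ℝ) (k : ℕ) : (1 / 2 : ℝ) ^ k / (1 + Real.exp (s - D k)) ≤ (1 / 2) ^ k :=
  div_le_self (by positivity) (by linarith [Real.exp_pos (s - D k)])

lemma summable (s : ℝ) :
    Summable fun k : ℕ => (1 / 2 : ℝ) ^ k / (1 + Real.exp (s - D k)) :=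
  summable_geometric_two.of_nonneg_of_le (term_nonneg s) (term_le s)

lemma nonneg (s : ℝ) : 0 ≤ decayProfile D s :=
  tsum_nonneg (term_nonneg s)

lemma continuous : Continuous (decayProfile D) := by
  refine continuous_tsum (fun k => continuous_const.div (by fun_prop) fun s => by positivity)
    summable_geometric_two fun k s => ?_
  rw [Real.norm_of_nonneg (term_nonneg s k)]
  exact term_le s k

lemma antitone : Antitone (decayProfile D) := fun s t hst =>
  (summable t).tsum_le_tsum (fun k => by gcongr) (summable s)

lemma tendsto_atTop : Tendsto (decayProfile D) atTop (𝓝 0) := by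
  unfold decayProfile
  have h := tendsto_tsum_of_dominated_convergence (𝓕 := atTop) (g := fun _ : ℕ => (0 : ℝ))
    (f := fun s k => (1 / 2 : ℝ) ^ k / (1 + Real.exp (s - D k))) summable_geometric_two
    (fun k => ?_) (Eventually.of_forall fun s k => ?_)
  · simpa only [tsum_zero] using h
  · refine tendsto_const_nhds.div_atTop (tendsto_atTop_add_const_left _ _ ?_)
    exact Real.tendsto_exp_atTop.comp (tendsto_atTop_add_const_right _ _ tendsto_id)
  · rw [Real.norm_of_nonneg (term_nonneg s k)]
    exact term_le s k

lemma pow_succ_le {s : ℝ} {k : ℕ} (hs : s ≤ D k) : (1 / 2 : ℝ) ^ (k + 1) ≤ decayProfile D s := by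
  have hexp : Real.exp (s - D k) ≤ 1 := Real.exp_le_one_iff.2 (by linarith)
  calc (1 / 2 : ℝ) ^ (k + 1) ≤ (1 / 2) ^ k / (1 + Real.exp (s - D k)) := by
        rw [pow_succ, le_div_iff₀ (by positivity)]
        nlinarith [pow_pos (by norm_num : (0 : ℝ) < 1 / 2) k]
    _ ≤ decayProfile D s := (summable s).le_tsum k fun j _ => term_nonneg s j

end decayProfile

lemma classKL_min_add_mul_exp {Ψ : ℝ → ℝ} (hc : Continuous Ψ) (ha : Antitone Ψ)
    (h0 : ∀ s, 0 ≤ Ψ s) (hlim : Tendsto Ψ atTop (𝓝 0)) :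
    ClassKL fun r s => min r (4 * (1 + r ^ 2) * Ψ s) + r * Real.exp (-s) := by
  have hzero : ∀ s, min 0 (4 * (1 + 0 ^ 2) * Ψ s) + 0 * Real.exp (-s) = 0 := fun s => by
    simp [h0 s]
  refine ⟨Continuous.continuousOn (by fun_prop),
    fun r s hr _ => add_nonneg (le_min hr (by have := h0 s; positivity)) (by positivity),
    fun s _ => ⟨fun r₁ hr₁ r₂ _ hr => ?_, hzero s⟩, fun r hr s₁ s₂ _ hs hpos => ?_, fun r hr => ?_⟩
  · have hΨ : 4 * (1 + r₁ ^ 2) * Ψ s ≤ 4 * (1 + r₂ ^ 2) * Ψ s := by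
      have := h0 s
      gcongr
    exact add_lt_add_of_le_of_lt (min_le_min hr.le hΨ)
      (mul_lt_mul_of_pos_right hr (Real.exp_pos _))
  · obtain rfl | hr := hr.eq_or_lt
    · exact absurd (hzero s₁) hpos.ne'
    · have hΨ : 4 * (1 + r ^ 2) * Ψ s₂ ≤ 4 * (1 + r ^ 2) * Ψ s₁ := by
        have := ha hs.le
        gcongr
      exact add_lt_add_of_le_of_lt (min_le_min le_rfl hΨ)
        (mul_lt_mul_of_pos_left (Real.exp_lt_exp.2 (neg_lt_neg hs)) hr)
  · have hmin : Tendsto (fun s => min r (4 * (1 + r ^ 2) * Ψ s)) atTop (𝓝 0) := by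
      simpa [hr] using (tendsto_const_nhds (x := r)).min (hlim.const_mul (4 * (1 + r ^ 2)))
    simpa using hmin.add (Real.tendsto_exp_neg_atTop_nhds_zero.const_mul r)

lemma le_min_mul_decayProfile (D : ℕ → ℝ) {r s y : ℝ} (hyr : y ≤ r)
    (H : ∀ n : ℕ, r ≤ 2 ^ n → D n ≤ s → y ≤ (1 / 2) ^ n) :
    y ≤ min r (4 * (1 + r ^ 2) * decayProfile (fun k => max (D k) k) s) := by
  -- If `s` lies between the levels `n` and `n + 1`, the profile is `≥ 2⁻ⁿ / 4`; the factor
  -- `4 (1 + r²)` covers both `y ≤ 2⁻ⁿ` (when `r ≤ 2ⁿ`) and `y ≤ r < r² 2⁻ⁿ` (otherwise).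
  refine le_min hyr ?_
  set E : ℕ → ℝ := fun k => max (D k) k
  suffices ∀ n : ℕ, s < E n → y ≤ 4 * (1 + r ^ 2) * decayProfile E s by
    obtain ⟨n, hn⟩ := exists_nat_gt s
    exact this n (hn.trans_le (le_max_right _ _))
  intro n
  induction n with
  | zero =>
    intro hs
    have hΨ : 1 / 2 ≤ decayProfile E s := by simpa using decayProfile.pow_succ_le hs.le
    have hr : r ≤ 2 * (1 + r ^ 2) := by nlinarith [sq_nonneg (r - 1)]
    nlinarith [mul_le_mul_of_nonneg_left hΨ (by positivity : (0 : ℝ) ≤ 1 + r ^ 2)]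
  | succ n ih =>
    intro hs
    by_cases hsn : s < E n
    · exact ih hsn
    have hΨ : (1 / 2) ^ n / 4 ≤ decayProfile E s := by
      convert decayProfile.pow_succ_le hs.le using 1
      ring
    have hq : (0 : ℝ) < (1 / 2) ^ n := by positivity
    by_cases hr : r ≤ 2 ^ n
    · have hy := H n hr ((le_max_left _ _).trans (not_lt.1 hsn))
      nlinarith
    · have hrq : 1 < r * (1 / 2) ^ n := by
        rw [one_div_pow, mul_one_div, one_lt_div (by positivity)]
        exact not_le.1 hr
      have hr0 : 0 < r := lt_trans (by positivity) (not_le.1 hr)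
      have : r ≤ (1 + r ^ 2) * (1 / 2) ^ n := by nlinarith
      nlinarith [mul_le_mul_of_nonneg_left hΨ (by positivity : (0 : ℝ) ≤ 1 + r ^ 2)]

theorem exists_classKL_of_levels (D : ℕ → ℝ) :
    ∃ β : ℝ → ℝ → ℝ, ClassKL β ∧ ∀ r s y : ℝ, 0 ≤ r → y ≤ r →
      (∀ n : ℕ, r ≤ 2 ^ n → D n ≤ s → y ≤ (1 / 2) ^ n) → y ≤ β r s :=
  ⟨_, classKL_min_add_mul_exp decayProfile.continuous decayProfile.antitone
      decayProfile.nonneg decayProfile.tendsto_atTop,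
    fun r s _ hr hyr H => (le_min_mul_decayProfile D hyr H).trans
      (le_add_of_nonneg_right (by positivity))⟩

theorem prop1c_general (φ ψ p : ℝ → ℝ) (θ : ℝ) (hφ : ClassP φ) (hψ : ClassP ψ)
    (hp : LocIntNN p) (hθ : 0 < θ)
    (hM : Mval φ ψ < 0) (hN : 0 < Nval p θ) :
    StrongGUAS p φ ψ {γ : Set ℝ | IsImpulseSeq γ} := by
  choose D hD using fun n : ℕ =>
    exists_uniform_attraction_time hφ hψ hp hθ hM hN (ε := (1 / 2) ^ n) (by positivity) (2 ^ n)
  obtain ⟨β, hβ, hbound⟩ := exists_classKL_of_levels D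
  refine ⟨β, hβ, fun γ hγ t0 ht0 z0 hz0 T z sol t ht htT => hbound _ _ _ hz0 ?_
    fun n hn hDn => hD n γ hγ t0 ht0 z0 hn T z sol t ht htT hDn⟩
  simpa [sol.init] using sol.apply_le_of_le hφ (fun _ => apply_le_self_of_Mval_neg hφ hψ hM) hp
    hγ ht0 le_rfl ht htT

/-- Proposition 1 c): if `ψ, φ` are of class `P`, `p` is nonnegative and locally
integrable, `θ > 0` satisfies `M < N`, and `M < 0 < N`, then the comparison system is
strongly GUAS uniformly over `S = Γ`. -/
theorem prop1c (φ ψ p : ℝ → ℝ) (θ : ℝ) (hφ : ClassP φ) (hψ : ClassP ψ)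
    (hp : LocIntNN p) (hθ : 0 < θ) (hMN : Mval φ ψ < Nval p θ)
    (hM : Mval φ ψ < 0) (hN : 0 < Nval p θ) :
    StrongGUAS p φ ψ {γ : Set ℝ | IsImpulseSeq γ} :=
  prop1c_general φ ψ p θ hφ hψ hp hθ hM hN
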